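/- Let f : X → 𝒢(Z,C) be a convex function and x₀ ∈ dom f. Then x₀ solves the strict scalarized Stampacchia inequality (svi_I): for all x ∈ X and all z* ∈ C⁻∖{0}, φ_{f,z*}(x₀) = −∞ or 0 ≤ φ′_{f,z*}(x₀, x−x₀), if and only if f(x₀) = cl co ⋃_{x∈X} f(x). -/

import Mathlib

open Set Pointwise

noncomputable section

variable {Z : Type*} [AddCommGroup Z] [Module ℝ Z] [TopologicalSpace Z]

/-- The inf-residual `A ⊖ B = {z : B + {z} ⊆ A}`. -/
def resid (A B : Set Z) : Set Z := {z : Z | B + {z} ⊆ A}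

/-- The recession cone `0⁺A`, with the convention `0⁺∅ = ∅`. -/
def recCone (A : Set Z) : Set Z := {z : Z | A.Nonempty ∧ A + {z} ⊆ A}

/-- `A ⊕ B = cl (A + B)`. -/
def oplus (A B : Set Z) : Set Z := closure (A + B)

/-- Membership in `𝒢(Z,C)`: `A = cl co (A + C)`. -/
def IsG (C A : Set Z) : Prop := A = closure (convexHull ℝ (A + C))

/-- The set `C⁻ \ {0}` of nonzero elements of the negative dual cone. -/
def negDualNZ (C : Set Z) : Set (Z →L[ℝ] ℝ) :=
  {p : Z →L[ℝ] ℝ | (∀ c ∈ C, p c ≤ 0) ∧ p ≠ 0}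

/-- `inf {-z*(z) : z ∈ A}` as an extended real. -/
def scal (p : Z →L[ℝ] ℝ) (A : Set Z) : EReal :=
  sInf ((fun z => ((-(p z) : ℝ) : EReal)) '' A)

/-- Support function `σ(z*|A) = sup {z*(z) : z ∈ A}` as an extended real. -/
def suppF (p : Z →L[ℝ] ℝ) (A : Set Z) : EReal :=
  sSup ((fun z => ((p z : ℝ) : EReal)) '' A)

/-- Inf-residuation on the extended reals: `r ⊖ s = inf {t ∈ ℝ : r ≤ s + t}`. -/
def eresid (r s : EReal) : EReal :=
  sInf ((fun t : ℝ => (t : EReal)) '' {t : ℝ | r ≤ s + (t : EReal)})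

variable {X : Type*} [AddCommGroup X] [Module ℝ X]

/-- The scalarization `φ_{f,z*}(x) = inf {-z*(z) : z ∈ f(x)}`. -/
def phi (f : X → Set Z) (p : Z →L[ℝ] ℝ) (x : X) : EReal := scal p (f x)

/-- Convexity for set-valued functions:
`f(t x₁ + (1-t) x₂) ⊇ cl (t f(x₁) + (1-t) f(x₂))`. -/
def ConvexSV (f : X → Set Z) : Prop :=
  ∀ x₁ x₂ : X, ∀ t : ℝ, t ∈ Ioo (0:ℝ) 1 →
    closure (t • f x₁ + (1 - t) • f x₂) ⊆ f (t • x₁ + (1 - t) • x₂)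

/-- The set-valued directional derivative
`f′(x,u) = ⋂_{t₀>0} cl co ⋃_{0<t<t₀} (1/t)•(f(x+tu) ⊖ f(x))`. -/
def sder (f : X → Set Z) (x u : X) : Set Z :=
  ⋂ t₀ ∈ Ioi (0:ℝ), closure (convexHull ℝ
    (⋃ t ∈ Ioo (0:ℝ) t₀, (1 / t) • resid (f (x + t • u)) (f x)))

/-- The scalar Dini derivative `φ′_{f,z*}(x,u) = inf_{t>0} (1/t)(φ(x+tu) ⊖ φ(x))`. -/
def phiDer (f : X → Set Z) (p : Z →L[ℝ] ℝ) (x u : X) : EReal :=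
  ⨅ t ∈ Ioi (0:ℝ), (((1 / t : ℝ)) : EReal) * eresid (phi f p (x + t • u)) (phi f p x)

end


/-!
As `f x₀ ≠ ∅`, `φ_{f,z*}(x₀) < +∞`, and then `φ′_{f,z*}(x₀, u) ≥ 0` holds exactly when no point
`x₀ + t u` with `t > 0` has a smaller value of `φ_{f,z*}`; taking `t = 1` shows that (svi_I) says
`φ_{f,z*}(x₀) ≤ φ_{f,z*}(x)` for all `x` and `z*`. Since `f x₀` is closed, convex and stable under
adding `C`, it is separated from any point outside by a functional in `C⁻ ∖ {0}`, so these scalar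
inequalities amount to `f x ⊆ f x₀` for all `x`, which is the equality `f(x₀) = cl co ⋃ₓ f(x)`.
-/

lemma zero_le_eresid_coe_iff {a : ℝ} {r : EReal} : 0 ≤ eresid r a ↔ (a : EReal) ≤ r := by
  simp only [eresid, le_sInf_iff, forall_mem_image, EReal.coe_nonneg]
  constructor
  · intro h
    by_contra! hra
    obtain ⟨x, hrx, hxa⟩ := EReal.lt_iff_exists_real_btwn.mp hra
    have := @h (x - a) (by rw [mem_ofPred_eq, ← EReal.coe_add, add_sub_cancel]; exact hrx.le)
    linarith [EReal.coe_lt_coe_iff.mp hxa]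
  · intro h t ht
    have := EReal.coe_le_coe_iff.mp (h.trans (ht.trans_eq (EReal.coe_add a t).symm))
    linarith

lemma EReal.zero_le_coe_mul_iff {c : ℝ} (hc : 0 < c) {e : EReal} :
    0 ≤ (c : EReal) * e ↔ 0 ≤ e := by
  have hc' : ¬ (c : EReal) ≤ 0 := by exact_mod_cast hc.not_ge
  simp [EReal.mul_nonneg_iff, hc', EReal.coe_nonneg.mpr hc.le]

section Scalarization

variable {Z : Type*} [AddCommGroup Z] [Module ℝ Z] [TopologicalSpace Z]

lemma scal_le_of_mem {p : Z →L[ℝ] ℝ} {A : Set Z} {z : Z} (hz : z ∈ A) :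
    scal p A ≤ ((-(p z) : ℝ) : EReal) :=
  sInf_le ⟨z, hz, rfl⟩

lemma scal_antitone (p : Z →L[ℝ] ℝ) {A B : Set Z} (h : A ⊆ B) : scal p B ≤ scal p A :=
  sInf_le_sInf (image_mono h)

lemma scal_ne_top (p : Z →L[ℝ] ℝ) {A : Set Z} (hA : A.Nonempty) : scal p A ≠ ⊤ :=
  ne_top_of_le_ne_top (EReal.coe_ne_top _) (scal_le_of_mem hA.some_mem)

lemma IsG.isClosed {C A : Set Z} (h : IsG C A) : IsClosed A := by
  rw [h]; exact isClosed_closure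

lemma IsG.add_subset {C A : Set Z} (h : IsG C A) : A + C ⊆ A := by
  conv_rhs => rw [h]
  exact (subset_convexHull ℝ _).trans subset_closure

lemma eq_closure_convexHull_iUnion_iff {ι : Type*} {s : ι → Set Z} {i : ι}
    (hclosed : IsClosed (s i)) (hconv : Convex ℝ (s i)) :
    s i = closure (convexHull ℝ (⋃ j, s j)) ↔ ∀ j, s j ⊆ s i := by
  refine ⟨fun h j => ?_, fun h => ?_⟩
  · rw [h]; exact (subset_iUnion s j).trans ((subset_convexHull ℝ _).trans subset_closure)
  · exact subset_antisymm ((subset_iUnion s i).trans ((subset_convexHull ℝ _).trans subset_closure))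
      (closure_minimal (convexHull_min (iUnion_subset h) hconv) hclosed)

lemma nonpos_on_cone_of_bddAbove {C A : Set Z} (hCcone : ∀ c ∈ C, ∀ r : ℝ, 0 < r → r • c ∈ C)
    (hAC : A + C ⊆ A) {a : Z} (ha : a ∈ A) {p : Z →L[ℝ] ℝ} {u : ℝ} (hpu : ∀ b ∈ A, p b ≤ u) :
    ∀ c ∈ C, p c ≤ 0 := by
  intro c hc
  by_contra! hpc
  set r := (u - p a + 1) / p c
  have hr : 0 < r := div_pos (by linarith [hpu a ha]) hpc
  have := hpu _ (hAC (add_mem_add ha (hCcone c hc r hr)))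
  rw [map_add, map_smul, smul_eq_mul, div_mul_cancel₀ _ hpc.ne'] at this
  linarith

variable [IsTopologicalAddGroup Z] [ContinuousSMul ℝ Z]

lemma IsG.convex {C A : Set Z} (h : IsG C A) : Convex ℝ A := by
  rw [h]; exact (convex_convexHull ℝ _).closure

lemma subset_of_forall_scal_le [LocallyConvexSpace ℝ Z] {C A B : Set Z}
    (hCcone : ∀ c ∈ C, ∀ r : ℝ, 0 < r → r • c ∈ C) (hA : IsG C A) (hne : A.Nonempty)
    (h : ∀ p ∈ negDualNZ C, scal p A ≤ scal p B) : B ⊆ A := by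
  intro z hzB
  by_contra hzA
  obtain ⟨p, u, hpA, hpz⟩ := geometric_hahn_banach_closed_point hA.convex hA.isClosed hzA
  obtain ⟨a, ha⟩ := hne
  have hp : p ∈ negDualNZ C := by
    refine ⟨nonpos_on_cone_of_bddAbove hCcone hA.add_subset ha fun b hb => (hpA b hb).le, ?_⟩
    rintro rfl
    simp only [zero_apply] at hpA hpz
    linarith [hpA a ha]
  have hAu : ((-u : ℝ) : EReal) ≤ scal p A :=
    le_sInf <| forall_mem_image.2 fun b hb => EReal.coe_le_coe_iff.2 (by linarith [hpA b hb])
  have := EReal.coe_le_coe_iff.1 ((hAu.trans (h p hp)).trans (scal_le_of_mem hzB))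
  linarith

end Scalarization

section Derivative

variable {Z : Type*} [AddCommGroup Z] [Module ℝ Z] [TopologicalSpace Z]
  {X : Type*} [AddCommGroup X] [Module ℝ X]

lemma eq_bot_or_zero_le_phiDer_iff {f : X → Set Z} {p : Z →L[ℝ] ℝ} {x u : X}
    (hx : phi f p x ≠ ⊤) :
    phi f p x = ⊥ ∨ 0 ≤ phiDer f p x u ↔ ∀ t : ℝ, 0 < t → phi f p x ≤ phi f p (x + t • u) := by
  rcases eq_or_ne (phi f p x) ⊥ with hbot | hbot
  · simp [hbot]
  obtain ⟨a, ha⟩ : ∃ a : ℝ, phi f p x = a := ⟨_, (EReal.coe_toReal hx hbot).symm⟩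
  simp only [phiDer, ha, EReal.coe_ne_bot, false_or, le_iInf₂_iff, mem_Ioi]
  refine forall₂_congr fun t ht => ?_
  rw [EReal.zero_le_coe_mul_iff (one_div_pos.2 ht), zero_le_eresid_coe_iff]

end Derivative

theorem stmt_11_general
  {Z : Type*} [AddCommGroup Z] [Module ℝ Z] [TopologicalSpace Z]
  [IsTopologicalAddGroup Z] [ContinuousSMul ℝ Z] [LocallyConvexSpace ℝ Z]
  {X : Type*} [AddCommGroup X] [Module ℝ X]
  (C : Set Z)
  (hCcone : ∀ c ∈ C, ∀ r : ℝ, 0 < r → r • c ∈ C)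
  (f : X → Set Z) (hG : ∀ x, IsG C (f x))
  (x₀ : X) (hx₀ : (f x₀).Nonempty) :
    (∀ x : X, ∀ p ∈ negDualNZ C,
      phi f p x₀ = ⊥ ∨ (0:EReal) ≤ phiDer f p x₀ (x - x₀)) ↔ (f x₀ = closure (convexHull ℝ (⋃ x : X, f x))) := by
  have hvi : ∀ x, ∀ p : Z →L[ℝ] ℝ, (phi f p x₀ = ⊥ ∨ 0 ≤ phiDer f p x₀ (x - x₀)) ↔
      ∀ t : ℝ, 0 < t → phi f p x₀ ≤ phi f p (x₀ + t • (x - x₀)) :=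
    fun _ p => eq_bot_or_zero_le_phiDer_iff (scal_ne_top p hx₀)
  rw [eq_closure_convexHull_iUnion_iff (hG x₀).isClosed (hG x₀).convex]
  constructor
  · intro h x
    refine subset_of_forall_scal_le hCcone (hG x₀) hx₀ fun p hp => ?_
    have hle := (hvi x p).1 (h x p hp) 1 one_pos
    rwa [one_smul, add_sub_cancel] at hle
  · exact fun h x p _ => (hvi x p).2 fun t _ => scal_antitone p (h _)

theorem stmt_11
  {Z : Type*} [AddCommGroup Z] [Module ℝ Z] [TopologicalSpace Z]
  [IsTopologicalAddGroup Z] [ContinuousSMul ℝ Z] [LocallyConvexSpace ℝ Z] [T2Space Z]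
  {X : Type*} [AddCommGroup X] [Module ℝ X]
  (C : Set Z) (hCclosed : IsClosed C) (hCconv : Convex ℝ C)
  (hCcone : ∀ c ∈ C, ∀ r : ℝ, 0 < r → r • c ∈ C) (hC0 : (0:Z) ∈ C)
  (hdual : (negDualNZ C).Nonempty)
  (f : X → Set Z) (hG : ∀ x, IsG C (f x)) (hf : ConvexSV f)
  (x₀ : X) (hx₀ : (f x₀).Nonempty) :
    (∀ x : X, ∀ p ∈ negDualNZ C,
      phi f p x₀ = ⊥ ∨ (0:EReal) ≤ phiDer f p x₀ (x - x₀)) ↔ (f x₀ = closure (convexHull ℝ (⋃ x : X, f x))) :=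
  stmt_11_general C hCcone f hG x₀ hx₀
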